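/- arXiv:1004.0545 — 4 statements merged into one kernel-verified Lean document; each statement's English description precedes it below -/
import Mathlib

section
/- For any finite set of points A₁,…,Aₙ in the plane, the perimeter of their convex hull is at most the length of any closed polygonal path visiting all of them; in particular, the perimeter of the convex hull of {A₁,…,Aₙ} is at most Σᵢ dist(Aᵢ, Aᵢ₊₁) (indices mod n). -/
/-!
Cauchy–Crofton. Let `p_θ` be the projection onto the line of direction `θ`. For `s` inside a
segment, `∫_{[0, 2π]} |p_θ(s)| dθ = 4 μH¹(s)`, and `∫_{[0, 2π]} |p_θ(v)| dθ = 4 ‖v‖`.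
A supporting line meets the hull in the hull of collinear points `Aᵢ`, so the frontier is covered
by the segments `[Aᵢ, Aⱼ]` and splits into disjoint measurable pieces of them. For almost every
`θ` the `p_θ(Aᵢ)` are distinct; then each line orthogonal to `θ` meets the frontier at most twice,
so the projections of the pieces have total length at most twice the width of the hull in
direction `θ`, and the closed polygon bounds that by `∑ |p_θ(Aᵢ₊₁ - Aᵢ)|`. Integrating over `θ`
gives `4 μH¹(frontier) ≤ 4 ∑ |AᵢAᵢ₊₁|`.
-/

open MeasureTheory Set Module Finset Function Real Fin.NatCast
open scoped ENNReal

noncomputable section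

namespace ConvexHullPerimeter

section ConvexGeometry

variable {E : Type*} [NormedAddCommGroup E] [NormedSpace ℝ E]

theorem mem_convexHull_inter_of_forall_le {S : Set E} (hS : S.Finite) (f : E →L[ℝ] ℝ) {x : E}
    (hx : x ∈ convexHull ℝ S) (hmax : ∀ y ∈ S, f y ≤ f x) :
    x ∈ convexHull ℝ (S ∩ f ⁻¹' {f x}) := by
  set K := convexHull ℝ S
  have hKmax : ∀ y ∈ K, f y ≤ f x :=
    fun y hy => convexHull_min hmax (convex_halfSpace_le f.toLinearMap.isLinear (f x)) hy
  -- The face of `K` exposed by `f` is compact and convex, so by Krein–Milman it is the closed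
  -- convex hull of its extreme points, which are extreme points of `K` and hence lie in `S`.
  set F := f.toExposed K
  have hF : IsExposed ℝ K F := ContinuousLinearMap.toExposed.isExposed
  have hxF : x ∈ F := ⟨hx, hKmax⟩
  have hext : F.extremePoints ℝ ⊆ S ∩ f ⁻¹' {f x} := fun y hy =>
    ⟨extremePoints_convexHull_subset (hF.isExtreme.extremePoints_subset_extremePoints hy),
      le_antisymm (hKmax y hy.1.1) (hy.1.2 x hx)⟩
  rw [← closure_convexHull_extremePoints (hF.isCompact (hS.isCompact_convexHull ℝ))
    (hF.convex (convex_convexHull ℝ S))] at hxF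
  exact closure_minimal (convexHull_mono hext)
    ((hS.inter_of_left _).isClosed_convexHull ℝ) hxF

theorem exists_convexHull_subset_segment_of_collinear {S : Set E} (hcol : Collinear ℝ S)
    (hS : S.Finite) (hne : S.Nonempty) : ∃ a ∈ S, ∃ b ∈ S, convexHull ℝ S ⊆ segment ℝ a b := by
  -- `a`, `b` realise the diameter of `S`
  obtain ⟨⟨a, b⟩, ⟨ha, hb⟩, hmax⟩ :=
    Set.exists_max_image _ (fun p : E × E => dist p.1 p.2) (hS.prod hS) (hne.prod hne)
  refine ⟨a, ha, b, hb, convexHull_min (fun w hw => ?_) (convex_segment a b)⟩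
  have hab : ∀ c ∈ S, ∀ d ∈ S, dist c d ≤ dist a b := fun c hc d hd => hmax (c, d) ⟨hc, hd⟩
  rcases (hcol.subset (insert_subset ha (insert_subset hw (singleton_subset_iff.2 hb))))
    |>.wbtw_or_wbtw_or_wbtw with h | h | h
  · exact h.mem_segment
  · have hwb : w = b := dist_eq_zero.1 (by
      linarith [h.dist_add_dist, hab w hw a ha, dist_nonneg (x := w) (y := b), dist_comm a b])
    exact hwb ▸ right_mem_segment ℝ a b
  · have haw : a = w := dist_eq_zero.1 (by
      linarith [h.dist_add_dist, hab b hb w hw, dist_nonneg (x := a) (y := w), dist_comm a b])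
    exact haw ▸ left_mem_segment ℝ a b

variable [FiniteDimensional ℝ E]

theorem exists_forall_le_of_mem_frontier {K : Set E} (hK : Convex ℝ K)
    {x : E} (hx : x ∈ frontier K) : ∃ f : E →L[ℝ] ℝ, f ≠ 0 ∧ ∀ y ∈ K, f y ≤ f x := by
  rcases (interior K).eq_empty_or_nonempty with hint | ⟨a, ha⟩
  · have hKne : K.Nonempty := closure_nonempty_iff.mp ⟨x, frontier_subset_closure hx⟩
    have hspan : affineSpan ℝ K ≠ ⊤ := by
      rw [Ne, ← hK.interior_nonempty_iff_affineSpan_eq_top, hint]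
      exact not_nonempty_empty
    have hdir : (affineSpan ℝ K).direction < ⊤ := by
      rw [lt_top_iff_ne_top, Ne, AffineSubspace.direction_eq_top_iff_of_nonempty
        (hKne.mono (subset_affineSpan ℝ K))]
      exact hspan
    obtain ⟨f, hf, hker⟩ := Submodule.exists_le_ker_of_lt_top _ hdir
    have hx' : x ∈ affineSpan ℝ K :=
      closure_minimal (subset_affineSpan ℝ K) (AffineSubspace.closed_of_finiteDimensional _)
        (frontier_subset_closure hx)
    refine ⟨LinearMap.toContinuousLinearMap f, by simpa using hf, fun y hy => le_of_eq ?_⟩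
    have := hker (AffineSubspace.vsub_mem_direction (subset_affineSpan ℝ K hy) hx')
    simp only [LinearMap.mem_ker, vsub_eq_sub, map_sub, sub_eq_zero] at this
    simpa using this
  · obtain ⟨f, hf⟩ := geometric_hahn_banach_open_point hK.interior isOpen_interior hx.2
    refine ⟨f, fun h => by simpa [h] using hf a ha, fun y hy => ?_⟩
    have hcl : closure (interior K) ⊆ {y | f y ≤ f x} :=
      closure_minimal (fun y hy => (hf y hy).le) (isClosed_le f.continuous continuous_const)
    rw [hK.closure_interior_eq_closure_of_nonempty_interior ⟨a, ha⟩] at hcl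
    exact hcl (subset_closure hy)

theorem collinear_preimage_singleton (hE : finrank ℝ E = 2)
    {f : E →L[ℝ] ℝ} (hf : f ≠ 0) (c : ℝ) : Collinear ℝ (f ⁻¹' {c}) := by
  have hf' : (f : E →ₗ[ℝ] ℝ) ≠ 0 := fun h => hf (ContinuousLinearMap.coe_injective h)
  have hker : finrank ℝ (LinearMap.ker (f : E →ₗ[ℝ] ℝ)) = 1 := by
    have := Module.Dual.finrank_ker_add_one_of_ne_zero hf'
    omega
  have hle : vectorSpan ℝ (f ⁻¹' {c}) ≤ LinearMap.ker (f : E →ₗ[ℝ] ℝ) := by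
    rw [vectorSpan_def, Submodule.span_le]
    rintro _ ⟨y, hy, z, hz, rfl⟩
    simp_all [vsub_eq_sub]
  rw [collinear_iff_finrank_le_one]
  exact (Submodule.finrank_mono hle).trans hker.le

theorem frontier_convexHull_subset_iUnion_segment (hE : finrank ℝ E = 2) {S : Set E}
    (hS : S.Finite) : frontier (convexHull ℝ S) ⊆ ⋃ a ∈ S, ⋃ b ∈ S, segment ℝ a b := by
  intro x hx
  obtain ⟨f, hf, hmax⟩ := exists_forall_le_of_mem_frontier (convex_convexHull ℝ S) hx
  have hxT := mem_convexHull_inter_of_forall_le hS f ((hS.isClosed_convexHull ℝ).frontier_subset hx)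
    fun y hy => hmax y (subset_convexHull ℝ S hy)
  obtain ⟨a, ha, b, hb, hsub⟩ := exists_convexHull_subset_segment_of_collinear
    ((collinear_preimage_singleton hE hf (f x)).subset inter_subset_right)
    (hS.inter_of_left _) (convexHull_nonempty_iff.mp ⟨x, hxT⟩)
  simp only [mem_iUnion]
  exact ⟨a, ha.1, b, hb.1, hsub hxT⟩

/-- A supporting line at `b` contains `a` and `c`, so it is the level line of `g` through them. It
meets `S` at most once, so the face it cuts out is at most a point and cannot hold `a ≠ c`. -/
theorem not_sbtw_of_mem_frontier_convexHull (hE : finrank ℝ E = 2) {S : Set E} (hS : S.Finite)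
    {g : E →L[ℝ] ℝ} (hg : InjOn g S) {a b c : E} (ha : a ∈ convexHull ℝ S)
    (hb : b ∈ frontier (convexHull ℝ S)) (hc : c ∈ convexHull ℝ S) (hac : g a = g c) :
    ¬ Sbtw ℝ a b c := by
  intro hbtw
  obtain ⟨f, hf, hmax⟩ := exists_forall_le_of_mem_frontier (convex_convexHull ℝ S) hb
  have hfa : f a = f b ∧ f c = f b := by
    obtain ⟨⟨r, ⟨hr0, hr1⟩, rfl⟩, hba, hbc⟩ := hbtw
    have hr0' : r ≠ 0 := by rintro rfl; simp at hba
    have hr1' : r ≠ 1 := by rintro rfl; simp at hbc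
    have hfb : f (AffineMap.lineMap a c r) = (1 - r) * f a + r * f c := by
      simp [AffineMap.lineMap_apply_module]
    have h1 := hmax a ha
    have h2 := hmax c hc
    rw [hfb] at h1 h2 ⊢
    constructor <;> nlinarith [lt_of_le_of_ne hr0 (Ne.symm hr0'), lt_of_le_of_ne hr1 hr1']
  have hface : ∀ x ∈ convexHull ℝ S, f x = f b → x ∈ convexHull ℝ (S ∩ f ⁻¹' {f b}) :=
    fun x hx hxb => hxb ▸ mem_convexHull_inter_of_forall_le hS f hx
      fun y hy => hxb ▸ hmax y (subset_convexHull ℝ S hy)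
  have hline : S ∩ f ⁻¹' {f b} ⊆ S ∩ g ⁻¹' {g a} := by
    rintro y ⟨hyS, hy⟩
    obtain ⟨r, rfl⟩ := mem_affineSpan_pair_iff_exists_lineMap_eq.mp
      ((collinear_preimage_singleton hE hf (f b)).mem_affineSpan_of_mem_of_ne
        hfa.1 hfa.2 hy hbtw.left_ne_right)
    refine ⟨hyS, ?_⟩
    simp [AffineMap.lineMap_apply_module, ← hac]
    ring
  have hsingle : (S ∩ g ⁻¹' {g a}).Subsingleton :=
    fun y hy z hz => hg hy.1 hz.1 (hy.2.trans hz.2.symm)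
  have hconv : (convexHull ℝ (S ∩ f ⁻¹' {f b})).Subsingleton := by
    rcases (hsingle.anti hline).eq_empty_or_singleton with h | ⟨p, h⟩ <;> simp [h]
  exact hbtw.left_ne_right (hconv (hface a ha hfa.1) (hface c hc hfa.2))

theorem eq_or_eq_or_eq_of_mem_frontier_convexHull (hE : finrank ℝ E = 2) {S : Set E}
    (hS : S.Finite) {g : E →L[ℝ] ℝ} (hg0 : g ≠ 0) (hg : InjOn g S) {a b c : E}
    (ha : a ∈ frontier (convexHull ℝ S)) (hb : b ∈ frontier (convexHull ℝ S))
    (hc : c ∈ frontier (convexHull ℝ S)) (hab : g a = g b) (hbc : g b = g c) :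
    a = b ∨ a = c ∨ b = c := by
  by_contra! hne
  obtain ⟨hab', hac', hbc'⟩ := hne
  have hK := (hS.isClosed_convexHull ℝ).frontier_subset
  have hcol : Collinear ℝ {a, b, c} := (collinear_preimage_singleton hE hg0 (g a)).subset <| by
    rintro x (rfl | rfl | rfl) <;> simp [hab, hbc]
  rcases hcol.wbtw_or_wbtw_or_wbtw with h | h | h
  · exact not_sbtw_of_mem_frontier_convexHull hE hS hg (hK ha) hb (hK hc) (hab.trans hbc)
      ⟨h, hab'.symm, hbc'⟩
  · exact not_sbtw_of_mem_frontier_convexHull hE hS hg (hK hb) hc (hK ha) hab.symm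
      ⟨h, hbc'.symm, hac'.symm⟩
  · exact not_sbtw_of_mem_frontier_convexHull hE hS hg (hK hc) ha (hK hb) hbc.symm
      ⟨h, hac', hab'⟩

end ConvexGeometry

section Width

theorem abs_sub_le_sum_Ico_abs_sub (G : ℕ → ℝ) {p q : ℕ} (hpq : p ≤ q) :
    |G q - G p| ≤ ∑ k ∈ Ico p q, |G (k + 1) - G k| := by
  rw [← Finset.sum_Ico_sub G hpq]
  exact Finset.abs_sum_le_sum_abs _ _

theorem two_mul_sub_le_sum_abs_sub {n : ℕ} [NeZero n] (g : Fin n → ℝ) (a b : Fin n) :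
    2 * (g b - g a) ≤ ∑ i, |g (i + 1) - g i| := by
  -- walk around the cycle from `a`: `G` reaches `b` after `m` steps and `a` again after `n`
  set G : ℕ → ℝ := fun k => g (a + (k : Fin n))
  set m := (b - a).val
  have hG0 : G 0 = g a := by simp [G]
  have hGm : G m = g b := by simp [G, m]
  have hGn : G n = g a := by simp [G]
  have hsum : ∑ i, |g (i + 1) - g i| = ∑ k ∈ range n, |G (k + 1) - G k| := by
    rw [← Equiv.sum_comp (Equiv.addLeft a), ← Fin.sum_univ_eq_sum_range]
    simp [G, add_assoc]
  rw [hsum, range_eq_Ico, ← sum_Ico_consecutive _ (Nat.zero_le m) (b - a).isLt.le]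
  have h1 := abs_sub_le_sum_Ico_abs_sub G (Nat.zero_le m)
  have h2 := abs_sub_le_sum_Ico_abs_sub G (b - a).isLt.le
  rw [hG0, hGm] at h1
  rw [hGm, hGn] at h2
  linarith [le_abs_self (g b - g a), neg_abs_le (g a - g b)]

theorem two_mul_volume_image_convexHull_le {E : Type*} [AddCommGroup E] [Module ℝ E] {n : ℕ}
    [NeZero n] (A : Fin n → E) (f : E →ₗ[ℝ] ℝ) :
    2 * volume (f '' convexHull ℝ (range A)) ≤ ∑ i, ENNReal.ofReal |f (A (i + 1)) - f (A i)| := by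
  obtain ⟨a, ha⟩ := Finite.exists_min (f ∘ A)
  obtain ⟨b, hb⟩ := Finite.exists_max (f ∘ A)
  have hsub : f '' convexHull ℝ (range A) ⊆ Icc (f (A a)) (f (A b)) := by
    rw [f.image_convexHull, ← range_comp]
    exact convexHull_min (range_subset_iff.2 fun i => ⟨ha i, hb i⟩) (convex_Icc _ _)
  calc 2 * volume (f '' convexHull ℝ (range A))
      ≤ 2 * ENNReal.ofReal (f (A b) - f (A a)) := by
        gcongr
        exact (measure_mono hsub).trans_eq Real.volume_Icc
    _ = ENNReal.ofReal (2 * (f (A b) - f (A a))) := by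
        rw [ENNReal.ofReal_mul zero_le_two, ENNReal.ofReal_ofNat]
    _ ≤ ENNReal.ofReal (∑ i, |f (A (i + 1)) - f (A i)|) :=
        ENNReal.ofReal_le_ofReal (two_mul_sub_le_sum_abs_sub (f ∘ A) a b)
    _ = ∑ i, ENNReal.ofReal |f (A (i + 1)) - f (A i)| :=
        ENNReal.ofReal_sum_of_nonneg fun i _ => abs_nonneg _

end Width

section MeasureTheory

variable {α ι : Type*} [MeasurableSpace α]

theorem exists_pairwise_disjoint_measurableSet_subset [Finite ι] {F : ι → Set α}
    (hF : ∀ i, MeasurableSet (F i)) :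
    ∃ E : ι → Set α, Pairwise (Disjoint on E) ∧ (∀ i, MeasurableSet (E i)) ∧
      (∀ i, E i ⊆ F i) ∧ ⋃ i, E i = ⋃ i, F i := by
  obtain ⟨N, ⟨e⟩⟩ := Finite.exists_equiv_fin ι
  set G : Fin N → Set α := F ∘ e.symm
  refine ⟨fun i => disjointed G (e i), fun i j hij => disjoint_disjointed G (e.injective.ne hij),
    fun i => ?_, fun i => by simpa [G] using disjointed_subset G (e i), ?_⟩
  · simp only [disjointed_eq_inter_compl]
    exact (hF _).inter (MeasurableSet.iInter fun j => MeasurableSet.iInter fun _ => (hF _).compl)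
  · rw [e.surjective.iUnion_comp (disjointed G), iUnion_disjointed]
    exact e.symm.surjective.iUnion_comp F

theorem sum_lintegral_le_lintegral_sum (μ : Measure α) (s : Finset ι) (f : ι → α → ℝ≥0∞) :
    ∑ i ∈ s, ∫⁻ a, f i a ∂μ ≤ ∫⁻ a, ∑ i ∈ s, f i a ∂μ := by
  classical
  induction s using Finset.induction_on with
  | empty => simp
  | insert i s hi ih =>
    simp only [Finset.sum_insert hi]
    exact (add_le_add_right ih _).trans (le_lintegral_add _ _)

open Classical in
theorem sum_measure_le_mul_measure_iUnion (μ : Measure α) [Fintype ι] {T : ι → Set α}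
    (hT : ∀ k, MeasurableSet (T k)) {m : ℕ} (hm : ∀ t, #{k | t ∈ T k} ≤ m) :
    ∑ k, μ (T k) ≤ m * μ (⋃ k, T k) := by
  have hpt : ∀ t, ∑ k, (T k).indicator 1 t ≤ (⋃ k, T k).indicator (fun _ => (m : ℝ≥0∞)) t := by
    intro t
    have hsum : ∑ k, (T k).indicator (1 : α → ℝ≥0∞) t = #{k | t ∈ T k} := by
      simp [indicator_apply, Finset.sum_boole]
    by_cases ht : t ∈ ⋃ k, T k
    · rw [indicator_of_mem ht, hsum]
      exact_mod_cast hm t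
    · rw [indicator_of_notMem ht]
      simp only [mem_iUnion, not_exists] at ht
      simp [indicator_of_notMem (ht _)]
  calc ∑ k, μ (T k) = ∑ k, ∫⁻ t, (T k).indicator 1 t ∂μ := by
        simp_rw [lintegral_indicator_one (hT _)]
    _ = ∫⁻ t, ∑ k, (T k).indicator 1 t ∂μ :=
        (lintegral_finsetSum _ fun k _ => measurable_one.indicator (hT k)).symm
    _ ≤ ∫⁻ t, (⋃ k, T k).indicator (fun _ => (m : ℝ≥0∞)) t ∂μ := lintegral_mono hpt
    _ = m * μ (⋃ k, T k) := lintegral_indicator_const (MeasurableSet.iUnion hT) _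

end MeasureTheory

section Segment

theorem injOn_segment_of_injOn {E : Type*} [AddCommGroup E] [Module ℝ E] {f : E →ₗ[ℝ] ℝ}
    {S : Set E} (hf : InjOn f S) {x y : E} (hx : x ∈ S) (hy : y ∈ S) :
    InjOn f (segment ℝ x y) := by
  rw [segment_eq_image_lineMap]
  rintro _ ⟨r, -, rfl⟩ _ ⟨r', -, rfl⟩ h
  simp only [AffineMap.lineMap_apply_module, map_add, map_smul, smul_eq_mul] at h
  rcases eq_or_ne (f x) (f y) with hxy | hxy
  · rw [hf hx hy hxy]
    simp
  · have : r = r' := by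
      have : (r - r') * (f y - f x) = 0 := by linear_combination h
      exact sub_eq_zero.1 ((mul_eq_zero.1 this).resolve_right (sub_ne_zero.2 hxy.symm))
    rw [this]

variable {E F : Type*} [NormedAddCommGroup E] [NormedSpace ℝ E] [MeasurableSpace E] [BorelSpace E]
  [NormedAddCommGroup F] [NormedSpace ℝ F] [MeasurableSpace F] [BorelSpace F]

theorem enorm_map_sub_mul_hausdorffMeasure {x y : E} {s : Set E} (hs : s ⊆ segment ℝ x y)
    (f : E →L[ℝ] F) : ‖f (y - x)‖ₑ * μH[1] s = ‖y - x‖ₑ * μH[1] (f '' s) := by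
  set t := AffineMap.lineMap x y ⁻¹' s ∩ Icc (0 : ℝ) 1
  have hs' : s = AffineMap.lineMap x y '' t := by
    rw [image_preimage_inter, ← segment_eq_image_lineMap, inter_eq_left.2 hs]
  have hfs : f '' s = AffineMap.lineMap (f x) (f y) '' t := by
    rw [hs', image_image]
    congr! 1 with r
    simp [AffineMap.lineMap_apply_module]
  rw [hfs, hs', hausdorffMeasure_lineMap_image, hausdorffMeasure_lineMap_image, ENNReal.smul_def,
    ENNReal.smul_def, nndist_comm, nndist_eq_nnnorm, nndist_comm, nndist_eq_nnnorm, ← map_sub]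
  simp only [smul_eq_mul, enorm_eq_nnnorm]
  ring

end Segment

section Plane

local notation "ℝ²" => EuclideanSpace ℝ (Fin 2)

def dirProj (θ : ℝ) : ℝ² →L[ℝ] ℝ :=
  cos θ • EuclideanSpace.proj 0 + sin θ • EuclideanSpace.proj 1

theorem dirProj_apply (θ : ℝ) (v : ℝ²) : dirProj θ v = cos θ * v 0 + sin θ * v 1 := by
  simp [dirProj]

theorem dirProj_ne_zero (θ : ℝ) : dirProj θ ≠ 0 := fun h => by
  have := congrArg (fun f : ℝ² →L[ℝ] ℝ => f !₂[cos θ, sin θ]) h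
  simp [dirProj_apply] at this
  nlinarith [sin_sq_add_cos_sq θ]

theorem exists_dirProj_eq_norm_mul_cos (v : ℝ²) : ∃ φ, ∀ θ, dirProj θ v = ‖v‖ * cos (θ - φ) := by
  set z : ℂ := ⟨v 0, v 1⟩
  have hz : ‖z‖ = ‖v‖ := by
    rw [Complex.norm_def, Complex.normSq_apply, EuclideanSpace.norm_eq, Fin.sum_univ_two]
    simp [z, sq]
  have h0 : ‖v‖ * cos z.arg = v 0 := hz ▸ Complex.norm_mul_cos_arg z
  have h1 : ‖v‖ * sin z.arg = v 1 := hz ▸ Complex.norm_mul_sin_arg z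
  refine ⟨z.arg, fun θ => ?_⟩
  rw [dirProj_apply, cos_sub, ← h0, ← h1]
  ring

theorem continuous_dirProj_apply (v : ℝ²) : Continuous fun θ => dirProj θ v := by
  simp only [dirProj_apply]
  fun_prop

theorem integral_abs_cos_sub (φ : ℝ) : ∫ θ in (0)..(2 * π), |cos (θ - φ)| = 4 := by
  have hper : Periodic (fun x => |cos x|) (2 * π) := fun x => by simp [cos_periodic x]
  have hint : ∀ a b : ℝ, IntervalIntegrable (fun x => |cos x|) volume a b :=
    fun a b => continuous_cos.abs.intervalIntegrable a b
  have hpos : ∫ θ in (-(π / 2))..(π / 2), |cos θ| = 2 := by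
    rw [intervalIntegral.integral_congr (g := cos) fun x hx => abs_of_nonneg
      (cos_nonneg_of_mem_Icc (by rwa [Set.uIcc_of_le (by linarith [pi_pos])] at hx)), integral_cos]
    norm_num
  have hneg : ∫ θ in (π / 2)..(-(π / 2) + 2 * π), |cos θ| = 2 := by
    rw [intervalIntegral.integral_congr (g := fun x => -cos x) fun x hx => by
      rw [Set.uIcc_of_le (by linarith [pi_pos])] at hx
      exact abs_of_nonpos (cos_nonpos_of_pi_div_two_le_of_le hx.1 (by linarith [hx.2])),
      intervalIntegral.integral_neg, integral_cos, sin_add_two_pi]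
    norm_num
  calc ∫ θ in (0)..(2 * π), |cos (θ - φ)|
      = ∫ θ in (0 - φ)..(0 - φ + 2 * π), |cos θ| := by
        rw [intervalIntegral.integral_comp_sub_right (fun x => |cos x|)]
        ring_nf
    _ = ∫ θ in (-(π / 2))..(-(π / 2) + 2 * π), |cos θ| := hper.intervalIntegral_add_eq _ _
    _ = 4 := by
        rw [← intervalIntegral.integral_add_adjacent_intervals (hint _ (π / 2)) (hint _ _), hpos,
          hneg]
        norm_num

theorem lintegral_abs_dirProj (v : ℝ²) :
    ∫⁻ θ in Icc 0 (2 * π), ENNReal.ofReal |dirProj θ v| = ENNReal.ofReal (4 * ‖v‖) := by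
  obtain ⟨φ, hφ⟩ := exists_dirProj_eq_norm_mul_cos v
  have hint : IntegrableOn (fun θ => |dirProj θ v|) (Icc 0 (2 * π)) :=
    (continuous_dirProj_apply v).abs.continuousOn.integrableOn_Icc
  rw [← ofReal_integral_eq_lintegral_ofReal hint (.of_forall fun θ => abs_nonneg _),
    integral_Icc_eq_integral_Ioc, ← intervalIntegral.integral_of_le two_pi_pos.le]
  simp_rw [hφ, abs_mul, abs_norm]
  rw [intervalIntegral.integral_const_mul, integral_abs_cos_sub, mul_comm]

theorem ae_dirProj_ne_zero {v : ℝ²} (hv : v ≠ 0) : ∀ᵐ θ, dirProj θ v ≠ 0 := by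
  obtain ⟨φ, hφ⟩ := exists_dirProj_eq_norm_mul_cos v
  refine measure_mono_null (fun θ hθ => ?_)
    ((countable_range fun k : ℤ => (2 * k + 1) * π / 2 + φ).measure_zero _)
  obtain ⟨k, hk⟩ := cos_eq_zero_iff.1 (by simpa [hφ, hv] using hθ)
  exact ⟨k, by linarith⟩

theorem ae_injOn_dirProj {S : Set ℝ²} (hS : S.Countable) : ∀ᵐ θ, InjOn (dirProj θ) S := by
  simp only [InjOn]
  rw [ae_ball_iff hS]
  intro x hx
  rw [ae_ball_iff hS]
  intro y hy
  rcases eq_or_ne x y with rfl | hxy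
  · exact .of_forall fun _ _ => rfl
  · filter_upwards [ae_dirProj_ne_zero (sub_ne_zero.2 hxy)] with θ hθ h
    exact absurd (by rw [map_sub, h, sub_self]) hθ

theorem lintegral_volume_image_dirProj {s : Set ℝ²} {x y : ℝ²} (hs : s ⊆ segment ℝ x y) :
    ∫⁻ θ in Icc 0 (2 * π), volume (dirProj θ '' s) = 4 * μH[1] s := by
  rcases eq_or_ne x y with rfl | hxy
  · have hs' : s.Subsingleton := subsingleton_singleton.anti (segment_same ℝ x ▸ hs)
    have hs0 : μH[1] s = 0 := measure_mono_null hs (by rw [hausdorffMeasure_segment, edist_self])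
    simp [(hs'.image _).measure_zero, hs0]
  have hne : ‖y - x‖ₑ ≠ 0 := by simpa [sub_eq_zero] using hxy.symm
  have key : ∀ θ, volume (dirProj θ '' s) =
      ‖y - x‖ₑ⁻¹ * (ENNReal.ofReal |dirProj θ (y - x)| * μH[1] s) := fun θ => by
    rw [← hausdorffMeasure_real, ← Real.enorm_eq_ofReal_abs,
      enorm_map_sub_mul_hausdorffMeasure hs, ← mul_assoc, ENNReal.inv_mul_cancel hne enorm_ne_top,
      one_mul]
  simp_rw [key]
  rw [lintegral_const_mul' _ _ (ENNReal.inv_ne_top.2 hne),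
    lintegral_mul_const _ (continuous_dirProj_apply _).abs.measurable.ennreal_ofReal,
    lintegral_abs_dirProj, ENNReal.ofReal_mul zero_le_four, ofReal_norm, ← mul_assoc,
    mul_comm _ ‖y - x‖ₑ, ← mul_assoc, ENNReal.inv_mul_cancel hne enorm_ne_top, one_mul]
  norm_num

theorem sum_volume_image_le_of_injOn {n : ℕ} [NeZero n] (A : Fin n → ℝ²)
    {E : Fin n × Fin n → Set ℝ²} (hdisj : Pairwise (Disjoint on E))
    (hmeas : ∀ p, MeasurableSet (E p))
    (hE : ∀ p, E p ⊆ frontier (convexHull ℝ (range A)) ∩ segment ℝ (A p.1) (A p.2))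
    {g : ℝ² →L[ℝ] ℝ} (hg0 : g ≠ 0) (hg : InjOn g (range A)) :
    ∑ p, volume (g '' E p) ≤ ∑ i, ENNReal.ofReal |g (A (i + 1)) - g (A i)| := by
  classical
  have hfr : ∀ p, E p ⊆ frontier (convexHull ℝ (range A)) := fun p x hx => (hE p hx).1
  have hmeas' : ∀ p, MeasurableSet (g '' E p) := fun p =>
    (hmeas p).image_of_continuousOn_injOn g.continuous.continuousOn
      ((injOn_segment_of_injOn (f := g.toLinearMap) hg (mem_range_self _)
        (mem_range_self _)).mono fun x hx => (hE p hx).2)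
  -- three pieces over `t` would give three frontier points on the line `g = t`
  have hmult : ∀ t, #{p | t ∈ g '' E p} ≤ 2 := by
    intro t
    by_contra! h
    obtain ⟨p, hp, q, hq, r, hr, hpq, hpr, hqr⟩ := Finset.two_lt_card.1 h
    simp only [Finset.mem_filter, Finset.mem_univ, true_and] at hp hq hr
    obtain ⟨x, hx, rfl⟩ := hp
    obtain ⟨y, hy, hyx⟩ := hq
    obtain ⟨z, hz, hzx⟩ := hr
    rcases eq_or_eq_or_eq_of_mem_frontier_convexHull finrank_euclideanSpace_fin (finite_range A)
      hg0 hg (hfr p hx) (hfr q hy) (hfr r hz) hyx.symm (hyx.trans hzx.symm) with rfl | rfl | rfl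
    · exact (hdisj hpq).ne_of_mem hx hy rfl
    · exact (hdisj hpr).ne_of_mem hx hz rfl
    · exact (hdisj hqr).ne_of_mem hy hz rfl
  have hunion : ⋃ p, g '' E p ⊆ g '' convexHull ℝ (range A) := iUnion_subset fun p =>
    image_mono ((hfr p).trans ((finite_range A).isClosed_convexHull ℝ).frontier_subset)
  calc ∑ p, volume (g '' E p) ≤ (2 : ℕ) * volume (⋃ p, g '' E p) :=
        sum_measure_le_mul_measure_iUnion _ hmeas' hmult
    _ ≤ 2 * volume (g '' convexHull ℝ (range A)) := by
        rw [Nat.cast_ofNat]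
        gcongr
    _ ≤ _ := two_mul_volume_image_convexHull_le A g.toLinearMap

theorem lintegral_sum_abs_dirProj_sub {n : ℕ} [NeZero n] (A : Fin n → ℝ²) :
    ∫⁻ θ in Icc 0 (2 * π), ∑ i, ENNReal.ofReal |dirProj θ (A (i + 1)) - dirProj θ (A i)| =
      4 * ENNReal.ofReal (∑ i, dist (A i) (A (i + 1))) := by
  simp_rw [← map_sub]
  rw [lintegral_finsetSum _ fun i _ => (continuous_dirProj_apply _).abs.measurable.ennreal_ofReal]
  rw [ENNReal.ofReal_sum_of_nonneg fun i _ => dist_nonneg, Finset.mul_sum]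
  refine Finset.sum_congr rfl fun i _ => ?_
  rw [lintegral_abs_dirProj, ENNReal.ofReal_mul zero_le_four, dist_eq_norm', ENNReal.ofReal_ofNat]

theorem exists_pairwise_disjoint_cover_frontier_convexHull {n : ℕ} (A : Fin n → ℝ²) :
    ∃ E : Fin n × Fin n → Set ℝ², Pairwise (Disjoint on E) ∧ (∀ p, MeasurableSet (E p)) ∧
      (∀ p, E p ⊆ frontier (convexHull ℝ (range A)) ∩ segment ℝ (A p.1) (A p.2)) ∧
      frontier (convexHull ℝ (range A)) ⊆ ⋃ p, E p := by
  obtain ⟨E, hdisj, hmeas, hEF, hunion⟩ := exists_pairwise_disjoint_measurableSet_subset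
    (F := fun p : Fin n × Fin n => frontier (convexHull ℝ (range A)) ∩ segment ℝ (A p.1) (A p.2))
    fun p => isClosed_frontier.measurableSet.inter (convexHull_pair (𝕜 := ℝ) (A p.1) (A p.2) ▸
      ((toFinite _).isClosed_convexHull ℝ).measurableSet)
  refine ⟨E, hdisj, hmeas, hEF, fun x hx => ?_⟩
  obtain ⟨i, j, hxij⟩ : ∃ i j, x ∈ segment ℝ (A i) (A j) := by
    simpa using frontier_convexHull_subset_iUnion_segment finrank_euclideanSpace_fin
      (finite_range A) hx
  exact hunion ▸ mem_iUnion.2 ⟨(i, j), hx, hxij⟩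

end Plane

end ConvexHullPerimeter

end

open MeasureTheory Set ConvexHullPerimeter

/-- The perimeter of the convex hull of finitely many points in the plane is at most the
length of the closed polygonal path `A₁A₂…AₙA₁` visiting all of them. -/
theorem perimeter_convexHull_le_closed_polygon_length
    (n : ℕ) [NeZero n] (A : Fin n → EuclideanSpace ℝ (Fin 2)) :
    μH[1] (frontier (convexHull ℝ (Set.range A))) ≤
      ENNReal.ofReal (∑ i : Fin n, dist (A i) (A (i + 1))) := by
  obtain ⟨E, hdisj, hmeas, hE, hcover⟩ := exists_pairwise_disjoint_cover_frontier_convexHull A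
  have hgeneric : ∀ᵐ θ ∂volume.restrict (Icc 0 (2 * π)), ∑ p, volume (dirProj θ '' E p) ≤
      ∑ i, ENNReal.ofReal |dirProj θ (A (i + 1)) - dirProj θ (A i)| :=
    ae_restrict_of_ae <| (ae_injOn_dirProj (countable_range A)).mono fun θ hθ =>
      sum_volume_image_le_of_injOn A hdisj hmeas hE (dirProj_ne_zero θ) hθ
  refine (ENNReal.mul_le_mul_iff_right four_ne_zero ENNReal.ofNat_ne_top).1 ?_
  calc 4 * μH[1] (frontier (convexHull ℝ (range A))) ≤ ∑ p, 4 * μH[1] (E p) := by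
        rw [← Finset.mul_sum]
        gcongr
        exact (measure_mono hcover).trans (measure_iUnion_fintype_le _ _)
    _ = ∑ p, ∫⁻ θ in Icc 0 (2 * π), volume (dirProj θ '' E p) := Finset.sum_congr rfl fun p _ =>
        (lintegral_volume_image_dirProj ((hE p).trans inter_subset_right)).symm
    _ ≤ ∫⁻ θ in Icc 0 (2 * π), ∑ p, volume (dirProj θ '' E p) :=
        sum_lintegral_le_lintegral_sum _ _ _
    _ ≤ ∫⁻ θ in Icc 0 (2 * π), ∑ i, ENNReal.ofReal |dirProj θ (A (i + 1)) - dirProj θ (A i)| :=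
        lintegral_mono_ae hgeneric
    _ = 4 * ENNReal.ofReal (∑ i, dist (A i) (A (i + 1))) := lintegral_sum_abs_dirProj_sub A
end

section
/- Folding a convex polygon along a line does not increase its perimeter: if M is a compact convex set in ℝ², q is a line, and M' is the union of (M intersected with one closed half-plane H of q) and the reflection across q of (M ∩ Hᶜ), then the perimeter of M' is at most the perimeter of M. -/
/-
Write `A = M ∩ H⁻` and `B = σ (M ∩ H⁺)`, so that the folded set is `A ∪ B`. For any two sets,
`∂(A ∪ B)` and `∂(A ∩ B)` are covered by `∂A` and `∂B` with multiplicity, hence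
`per (A ∪ B) + per (A ∩ B) ≤ per A + per B`. If `S = M ∩ q` has length `ℓ`, then `per A` is at most
`ℓ` plus the length of `∂M` strictly below `q`, and `per B` is at most `ℓ` plus the length of `∂M`
strictly above `q`. When `M` meets both open half-planes, the relative interior of `S` lies in the
interior of `M`, so `A ∩ B` contains points strictly below every relative interior point of `S`
while lying below `q`; its frontier then contains `S` together with a lowest arc projecting onto
`S`, so `per (A ∩ B) ≥ 2ℓ`. Cancelling `2ℓ` gives the claim. If `M` lies on one side of `q`, the
folded set is `M` or `σ M`.
-/

open MeasureTheory Set Filter Topology Module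
open scoped RealInnerProductSpace

theorem measure_inter_setOf_lt_add_measure_inter_setOf_gt_le {X : Type*} [MeasurableSpace X]
    (μ : Measure X) (s : Set X) {f : X → ℝ} (hf : Measurable f) (c : ℝ) :
    μ (s ∩ {x | f x < c}) + μ (s ∩ {x | c < f x}) ≤ μ s :=
  calc μ (s ∩ {x | f x < c}) + μ (s ∩ {x | c < f x})
      ≤ μ (s ∩ {x | f x < c}) + μ (s \ {x | f x < c}) :=
        add_le_add le_rfl
          (measure_mono fun x hx => ⟨hx.1, fun h => lt_asymm (show f x < c from h) hx.2⟩)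
    _ = μ s := measure_inter_add_sdiff s (measurableSet_lt hf measurable_const)

section Frontier

variable {X : Type*} [TopologicalSpace X]

theorem frontier_union_union_frontier_inter_subset (s t : Set X) :
    frontier (s ∪ t) ∪ frontier (s ∩ t) ⊆ frontier s ∪ frontier t :=
  union_subset
    ((frontier_union_subset s t).trans (union_subset_union inter_subset_left inter_subset_right))
    ((frontier_inter_subset s t).trans (union_subset_union inter_subset_left inter_subset_right))

theorem frontier_union_inter_frontier_inter_subset (s t : Set X) :
    frontier (s ∪ t) ∩ frontier (s ∩ t) ⊆ frontier s ∩ frontier t := by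
  rintro x ⟨hxU, hxI, -⟩
  have hnU := hxU.2
  exact ⟨⟨closure_mono inter_subset_left hxI, fun h => hnU (interior_mono subset_union_left h)⟩,
    ⟨closure_mono inter_subset_right hxI, fun h => hnU (interior_mono subset_union_right h)⟩⟩

theorem measure_frontier_union_add_measure_frontier_inter_le [MeasurableSpace X]
    [OpensMeasurableSpace X] (μ : Measure X) (s t : Set X) :
    μ (frontier (s ∪ t)) + μ (frontier (s ∩ t)) ≤ μ (frontier s) + μ (frontier t) := by
  rw [← measure_union_add_inter _ isClosed_frontier.measurableSet,
    ← measure_union_add_inter _ isClosed_frontier.measurableSet]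
  exact add_le_add (measure_mono (frontier_union_union_frontier_inter_subset s t))
    (measure_mono (frontier_union_inter_frontier_inter_subset s t))

theorem frontier_inter_setOf_le_subset {α : Type*} [LinearOrder α] [TopologicalSpace α]
    [OrderClosedTopology α] {M : Set X} (hM : IsClosed M) {f g : X → α} (hf : Continuous f)
    (hg : Continuous g) :
    frontier (M ∩ {x | f x ≤ g x}) ⊆ (frontier M ∩ {x | f x < g x}) ∪ (M ∩ {x | f x = g x}) := by
  intro x hx
  rcases frontier_inter_subset _ _ hx with ⟨hxM, hxle⟩ | ⟨hxM, hxeq⟩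
  · rw [closure_le_eq hf hg] at hxle
    rcases hxle.lt_or_eq with hlt | heq
    · exact Or.inl ⟨hxM, hlt⟩
    · exact Or.inr ⟨hM.frontier_subset hxM, heq⟩
  · exact Or.inr ⟨hM.closure_eq ▸ hxM, frontier_le_subset_eq hf hg hxeq⟩

theorem measure_frontier_inter_setOf_le_le [MeasurableSpace X] (μ : Measure X)
    {α : Type*} [LinearOrder α] [TopologicalSpace α]
    [OrderClosedTopology α] {M : Set X} (hM : IsClosed M) {f g : X → α} (hf : Continuous f)
    (hg : Continuous g) :
    μ (frontier (M ∩ {x | f x ≤ g x})) ≤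
      μ (frontier M ∩ {x | f x < g x}) + μ (M ∩ {x | f x = g x}) :=
  (measure_mono (frontier_inter_setOf_le_subset hM hf hg)).trans (measure_union_le _ _)

end Frontier

theorem Convex.mem_nhdsWithin_ge_of_mem_nhdsWithin_eq {E : Type*} [NormedAddCommGroup E]
    [NormedSpace ℝ E] {M : Set E} (hM : Convex ℝ M) (f : E →L[ℝ] ℝ) {c : ℝ} {p x : E}
    (hp : p ∈ M) (hpc : c < f p) (hx : f x = c) (hMx : M ∈ 𝓝[f ⁻¹' {c}] x) :
    M ∈ 𝓝[{y | c ≤ f y}] x := by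
  -- On the side of `p`, `y = lam y • p + (1 - lam y) • π y` with `π y` the point where the line
  -- through `p` and `y` meets `f = c`; `π` is continuous at `x` and fixes it.
  set lam : E → ℝ := fun y => (f y - c) / (f p - c)
  set π : E → E := fun y => (1 - lam y)⁻¹ • (y - lam y • p)
  have hlam : Continuous lam := by fun_prop
  have hlamx : lam x = 0 := by simp [lam, hx]
  have hπ : ContinuousAt π x := by
    refine ((continuous_const.sub hlam).continuousAt.inv₀ ?_).smul (by fun_prop)
    simp [hlamx]
  have hπx : π x = x := by simp [π, hlamx]
  have hlt : ∀ᶠ y in 𝓝 x, lam y < 1 :=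
    hlam.continuousAt.eventually (gt_mem_nhds (hlamx ▸ one_pos))
  have hπM : ∀ᶠ y in 𝓝 x, f (π y) = c → π y ∈ M := by
    rw [mem_nhdsWithin_iff_eventually, ← hπx] at hMx
    exact hπ.eventually hMx
  rw [mem_nhdsWithin_iff_eventually]
  filter_upwards [hlt, hπM] with y hy1 hyM hyc
  have hd : 0 < f p - c := sub_pos.mpr hpc
  have hne : 1 - lam y ≠ 0 := (sub_pos.mpr hy1).ne'
  have hline : f (π y) = c := by
    have key : f y - lam y * f p = (1 - lam y) * c := by
      simp only [lam]; field_simp; ring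
    simp only [π, map_smul, map_sub, smul_eq_mul, key, inv_mul_cancel_left₀ hne]
  have : lam y • p + (1 - lam y) • π y = y := by
    simp only [π, smul_inv_smul₀ hne]; abel
  rw [← this]
  exact hM hp (hyM hline) (div_nonneg (sub_nonneg.mpr hyc) hd.le) (sub_pos.mpr hy1).le (by ring)

theorem Convex.mem_interior_of_mem_nhdsWithin_eq {E : Type*} [NormedAddCommGroup E]
    [NormedSpace ℝ E] {M : Set E} (hM : Convex ℝ M) (f : E →L[ℝ] ℝ) {c : ℝ} {p q x : E}
    (hp : p ∈ M) (hq : q ∈ M) (hpc : c < f p) (hqc : f q < c) (hx : f x = c)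
    (hMx : M ∈ 𝓝[f ⁻¹' {c}] x) : x ∈ interior M := by
  have hline : (-f) ⁻¹' {-c} = f ⁻¹' {c} := by ext; simp
  have h₁ := hM.mem_nhdsWithin_ge_of_mem_nhdsWithin_eq f hp hpc hx hMx
  have h₂ := hM.mem_nhdsWithin_ge_of_mem_nhdsWithin_eq (-f) hq (neg_lt_neg hqc)
    (by simp [hx]) (hline ▸ hMx)
  have hcover : {y | c ≤ f y} ∪ {y | -c ≤ (-f) y} = univ := by
    ext y; simpa using le_total c (f y)
  rw [mem_interior_iff_mem_nhds, ← nhdsWithin_univ, ← hcover, nhdsWithin_union]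
  exact mem_sup.mpr ⟨h₁, h₂⟩

section InnerProductSpace

variable {E : Type*} [NormedAddCommGroup E] [InnerProductSpace ℝ E]

theorem eventually_add_smul_mem_of_mem_interior {M : Set E} {x : E} (hx : x ∈ interior M)
    (u : E) : ∀ᶠ s in 𝓝 (0 : ℝ), x + s • u ∈ M := by
  have h : Tendsto (fun s : ℝ => x + s • u) (𝓝 0) (𝓝 x) :=
    (by fun_prop : Continuous fun s : ℝ => x + s • u).tendsto' 0 x (by simp)
  exact h.eventually (mem_interior_iff_mem_nhds.mp hx)

theorem IsCompact.exists_mem_frontier_inner_le {K : Set E} (hK : IsCompact K) {u v y : E}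
    (hu : u ≠ 0) (hvu : ⟪v, u⟫ = 0) (hy : y ∈ K) :
    ∃ w ∈ frontier K, ⟪v, w⟫ = ⟪v, y⟫ ∧ ⟪u, w⟫ ≤ ⟪u, y⟫ := by
  have hF : IsCompact (K ∩ {x | ⟪v, x⟫ = ⟪v, y⟫}) :=
    hK.inter_right (isClosed_eq (by fun_prop) continuous_const)
  obtain ⟨w, ⟨hwK, hwv⟩, hmin⟩ :=
    hF.exists_isMinOn ⟨y, hy, rfl⟩ (continuous_const.inner (𝕜 := ℝ) continuous_id).continuousOn
  refine ⟨w, ⟨subset_closure hwK, fun hint => ?_⟩, hwv, hmin ⟨hy, rfl⟩⟩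
  obtain ⟨s, hsK, hs⟩ := ((eventually_add_smul_mem_of_mem_interior hint (-u)).filter_mono
    nhdsWithin_le_nhds |>.and (self_mem_nhdsWithin (s := Ioi 0))).exists
  have hle : ⟪u, w⟫ ≤ ⟪u, w + s • -u⟫ :=
    hmin ⟨hsK, by simpa [inner_add_right, inner_smul_right, hvu] using hwv⟩
  have hu2 : 0 < ⟪u, u⟫ := real_inner_self_pos.mpr hu
  rw [inner_add_right, inner_smul_right, inner_neg_right] at hle
  nlinarith

end InnerProductSpace

section Reflection

variable {E : Type*} [NormedAddCommGroup E] [InnerProductSpace ℝ E] {u : E} (c : ℝ)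

/-- The reflection across the hyperplane `⟪u, x⟫ = c`, for a unit vector `u`. -/
def foldReflection (u : E) (c : ℝ) (x : E) : E := x - (2 * (⟪u, x⟫ - c)) • u

theorem inner_foldReflection (hu : ‖u‖ = 1) (x : E) :
    ⟪u, foldReflection u c x⟫ = 2 * c - ⟪u, x⟫ := by
  rw [foldReflection, inner_sub_right, real_inner_smul_right, real_inner_self_eq_norm_sq, hu]
  ring

theorem foldReflection_of_inner_eq {x : E} (hx : ⟪u, x⟫ = c) : foldReflection u c x = x := by
  simp [foldReflection, hx]

theorem foldReflection_involutive (hu : ‖u‖ = 1) : Function.Involutive (foldReflection u c) := by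
  intro x
  rw [foldReflection, inner_foldReflection c hu, foldReflection]
  module

theorem isometry_foldReflection (hu : ‖u‖ = 1) : Isometry (foldReflection u c) := by
  refine Isometry.of_dist_eq fun x y => ?_
  have h : foldReflection u c x - foldReflection u c y = (x - y) - (2 * ⟪u, x - y⟫) • u := by
    simp only [foldReflection, inner_sub_right]; module
  rw [dist_eq_norm, dist_eq_norm, h, ← sq_eq_sq₀ (norm_nonneg _) (norm_nonneg _),
    norm_sub_sq_real, norm_smul, real_inner_smul_right, real_inner_comm, hu, Real.norm_eq_abs,
    mul_one, sq_abs]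
  ring

def foldReflectionEquiv (hu : ‖u‖ = 1) : E ≃ᵢ E :=
  { (foldReflection_involutive c hu).toPerm _ with isometry_toFun := isometry_foldReflection c hu }

theorem coe_foldReflectionEquiv (hu : ‖u‖ = 1) :
    ⇑(foldReflectionEquiv c hu) = foldReflection u c :=
  rfl

end Reflection

namespace Orientation

variable {E : Type*} [NormedAddCommGroup E] [InnerProductSpace ℝ E] [Fact (finrank ℝ E = 2)]
  (o : Orientation ℝ E (Fin 2)) {u : E}

local notation "J" => o.rightAngleRotation

theorem inner_smul_add_inner_rightAngleRotation_smul (hu : ‖u‖ = 1) (x : E) :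
    ⟪u, x⟫ • u + ⟪J u, x⟫ • J u = x := by
  refine ext_inner_right ℝ fun y => ?_
  rw [inner_add_left, real_inner_smul_left, real_inner_smul_left, o.inner_rightAngleRotation_left,
    o.inner_rightAngleRotation_left, o.inner_mul_inner_add_areaForm_mul_areaForm, hu, one_pow,
    one_mul]

/-- The line `⟪u, x⟫ = c`, parametrized by arc length. -/
noncomputable def lineParam (u : E) (c t : ℝ) : E := c • u + t • J u

theorem inner_lineParam (hu : ‖u‖ = 1) (c t : ℝ) : ⟪u, o.lineParam u c t⟫ = c := by
  simp [lineParam, inner_add_right, inner_smul_right, hu]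

theorem inner_rightAngleRotation_lineParam (hu : ‖u‖ = 1) (c t : ℝ) :
    ⟪J u, o.lineParam u c t⟫ = t := by
  rw [lineParam, inner_add_right, real_inner_smul_right, real_inner_smul_right,
    o.inner_rightAngleRotation_self, inner_comp_rightAngleRotation, real_inner_self_eq_norm_sq, hu]
  ring

theorem lineParam_inner_rightAngleRotation (hu : ‖u‖ = 1) {c : ℝ} {x : E} (hx : ⟪u, x⟫ = c) :
    o.lineParam u c ⟪J u, x⟫ = x := by
  rw [lineParam, ← hx, o.inner_smul_add_inner_rightAngleRotation_smul hu]

theorem isometry_lineParam (hu : ‖u‖ = 1) (c : ℝ) : Isometry (o.lineParam u c) :=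
  Isometry.of_dist_eq fun s t => by
    rw [dist_eq_norm, lineParam, lineParam, add_sub_add_left_eq_sub, ← sub_smul, norm_smul,
      LinearIsometryEquiv.norm_map, hu, mul_one, Real.dist_eq, Real.norm_eq_abs]

theorem hausdorffMeasure_lineParam_image_Icc [MeasurableSpace E] [BorelSpace E] (hu : ‖u‖ = 1)
    (c α β : ℝ) :
    μH[1] (o.lineParam u c '' Icc α β) = ENNReal.ofReal (β - α) := by
  rw [(o.isometry_lineParam hu c).hausdorffMeasure_image (Or.inl zero_le_one),
    hausdorffMeasure_real, Real.volume_Icc]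

theorem exists_inter_eq_lineParam_image_Icc {M : Set E} (hMc : IsCompact M)
    (hMconv : Convex ℝ M) (hu : ‖u‖ = 1) (c : ℝ) :
    ∃ α β, M ∩ {x | ⟪u, x⟫ = c} = o.lineParam u c '' Icc α β := by
  set S := M ∩ {x | ⟪u, x⟫ = c}
  rcases S.eq_empty_or_nonempty with hS | hS
  · exact ⟨1, 0, by simp [hS]⟩
  set g : E → ℝ := fun x => ⟪J u, x⟫
  have hg : Continuous g := by fun_prop
  have hSc : IsCompact S := hMc.inter_right (isClosed_eq (by fun_prop) continuous_const)
  have hSconv : Convex ℝ S := hMconv.inter (convex_hyperplane (innerₛₗ ℝ u).isLinear c)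
  have hI := eq_Icc_of_connected_compact ⟨hS.image _, hSconv.isPreconnected.image _ hg.continuousOn⟩
    (hSc.image hg)
  refine ⟨sInf (g '' S), sSup (g '' S), ?_⟩
  rw [← hI, image_image, image_congr fun x hx => o.lineParam_inner_rightAngleRotation hu hx.2,
    image_id']

theorem lineParam_mem_interior {M : Set E} (hMconv : Convex ℝ M) (hu : ‖u‖ = 1) {c α β t : ℝ}
    {p q : E} (hp : p ∈ M) (hq : q ∈ M) (hpc : c < ⟪u, p⟫) (hqc : ⟪u, q⟫ < c)
    (hS : M ∩ {x | ⟪u, x⟫ = c} = o.lineParam u c '' Icc α β) (ht : t ∈ Ioo α β) :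
    o.lineParam u c t ∈ interior M := by
  refine hMconv.mem_interior_of_mem_nhdsWithin_eq (innerSL ℝ u) hp hq hpc hqc
    (o.inner_lineParam hu c t) ?_
  have hopen : IsOpen {x : E | ⟪J u, x⟫ ∈ Ioo α β} := isOpen_Ioo.preimage (by fun_prop)
  refine mem_nhdsWithin.mpr
    ⟨_, hopen, by simpa only [mem_ofPred_eq, o.inner_rightAngleRotation_lineParam hu], ?_⟩
  rintro x ⟨hxt, hxc : ⟪u, x⟫ = c⟩
  have : x ∈ o.lineParam u c '' Icc α β :=
    ⟨_, Ioo_subset_Icc_self hxt, o.lineParam_inner_rightAngleRotation hu hxc⟩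
  exact (hS.symm ▸ this).1

theorem two_mul_ofReal_le_hausdorffMeasure_frontier [MeasurableSpace E] [BorelSpace E] {K : Set E}
    (hK : IsCompact K) (hu : ‖u‖ = 1) {c α β : ℝ} (hKc : K ⊆ {x | ⟪u, x⟫ ≤ c})
    (hS : o.lineParam u c '' Icc α β ⊆ K)
    (hlow : ∀ t ∈ Ioo α β, ∃ y ∈ K, ⟪J u, y⟫ = t ∧ ⟪u, y⟫ < c) :
    2 * ENNReal.ofReal (β - α) ≤ μH[1] (frontier K) := by
  have hu0 : u ≠ 0 := by rintro rfl; simp at hu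
  have hup : o.lineParam u c '' Icc α β ⊆ frontier K ∩ {x | ⟪u, x⟫ = c} := by
    rintro _ ⟨t, ht, rfl⟩
    -- the highest point of `K` on the fiber through `lineParam t` can only be that point itself
    obtain ⟨w, hw, hwt, hwc⟩ := hK.exists_mem_frontier_inner_le (v := J u) (neg_ne_zero.mpr hu0)
      (by simp) (hS ⟨t, ht, rfl⟩)
    rw [o.inner_rightAngleRotation_lineParam hu] at hwt
    rw [inner_neg_left, inner_neg_left, o.inner_lineParam hu, neg_le_neg_iff] at hwc
    have hwc' : ⟪u, w⟫ = c := le_antisymm (hKc (hK.isClosed.frontier_subset hw)) hwc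
    rw [← hwt, o.lineParam_inner_rightAngleRotation hu hwc']
    exact ⟨hw, hwc'⟩
  have hdown : Ioo α β ⊆ (fun x => ⟪J u, x⟫) '' (frontier K ∩ {x | ⟪u, x⟫ < c}) := by
    intro t ht
    obtain ⟨y, hyK, hyt, hyc⟩ := hlow t ht
    obtain ⟨w, hw, hwt, hwc⟩ := hK.exists_mem_frontier_inner_le (v := J u) hu0 (by simp) hyK
    exact ⟨w, ⟨hw, hwc.trans_lt hyc⟩, hwt.trans hyt⟩
  have hlip : LipschitzWith 1 fun x : E => ⟪J u, x⟫ := by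
    refine LipschitzWith.of_dist_le_mul fun x y => ?_
    simpa [dist_eq_norm, ← inner_sub_right, hu] using abs_real_inner_le_norm (J u) (x - y)
  have hdisj : Disjoint (frontier K ∩ {x | ⟪u, x⟫ = c}) (frontier K ∩ {x | ⟪u, x⟫ < c}) :=
    disjoint_left.mpr fun x h₁ h₂ => h₂.2.ne h₁.2
  calc 2 * ENNReal.ofReal (β - α) = μH[1] (o.lineParam u c '' Icc α β) + μH[1] (Ioo α β) := by
        rw [two_mul, o.hausdorffMeasure_lineParam_image_Icc hu, hausdorffMeasure_real,
          Real.volume_Ioo]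
    _ ≤ μH[1] (frontier K ∩ {x | ⟪u, x⟫ = c}) + μH[1] (frontier K ∩ {x | ⟪u, x⟫ < c}) := by
        refine add_le_add (measure_mono hup) ?_
        simpa using (measure_mono hdown).trans (hlip.hausdorffMeasure_image_le zero_le_one _)
    _ = μH[1] ((frontier K ∩ {x | ⟪u, x⟫ = c}) ∪ (frontier K ∩ {x | ⟪u, x⟫ < c})) :=
        (measure_union hdisj (isClosed_frontier.measurableSet.inter
          (isOpen_lt (by fun_prop) continuous_const).measurableSet)).symm
    _ ≤ μH[1] (frontier K) := measure_mono (union_subset inter_subset_left inter_subset_left)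

end Orientation

section Fold

variable {E : Type*} [NormedAddCommGroup E] [InnerProductSpace ℝ E] {u : E} (c : ℝ) {M : Set E}

theorem inter_setOf_inner_eq_subset_fold_inter :
    M ∩ {x | ⟪u, x⟫ = c} ⊆
      (M ∩ {x | ⟪u, x⟫ ≤ c}) ∩ foldReflection u c '' (M ∩ {x | c ≤ ⟪u, x⟫}) :=
  fun x ⟨hxM, hx⟩ => ⟨⟨hxM, hx.le⟩, x, ⟨hxM, hx.ge⟩, foldReflection_of_inner_eq c hx⟩

theorem mem_fold_inter (hu : ‖u‖ = 1) {y : E} (hy : y ∈ M) (hσy : foldReflection u c y ∈ M)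
    (hyc : ⟪u, y⟫ ≤ c) :
    y ∈ (M ∩ {x | ⟪u, x⟫ ≤ c}) ∩ foldReflection u c '' (M ∩ {x | c ≤ ⟪u, x⟫}) := by
  refine ⟨⟨hy, hyc⟩, foldReflection u c y, ⟨hσy, ?_⟩, foldReflection_involutive c hu y⟩
  rw [mem_ofPred_eq, inner_foldReflection c hu]
  linarith

theorem fold_eq_self_of_forall_inner_le (h : ∀ x ∈ M, ⟪u, x⟫ ≤ c) :
    (M ∩ {x | ⟪u, x⟫ ≤ c}) ∪ foldReflection u c '' (M ∩ {x | c ≤ ⟪u, x⟫}) = M := by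
  refine subset_antisymm (union_subset inter_subset_left ?_) fun x hx => Or.inl ⟨hx, h x hx⟩
  rintro _ ⟨x, ⟨hxM, hx⟩, rfl⟩
  rwa [foldReflection_of_inner_eq c (le_antisymm (h x hxM) hx)]

theorem fold_eq_image_of_forall_le_inner (h : ∀ x ∈ M, c ≤ ⟪u, x⟫) :
    (M ∩ {x | ⟪u, x⟫ ≤ c}) ∪ foldReflection u c '' (M ∩ {x | c ≤ ⟪u, x⟫}) =
      foldReflection u c '' M := by
  rw [show M ∩ {x | c ≤ ⟪u, x⟫} = M from inter_eq_left.mpr h]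
  refine union_subset_iff.mpr ⟨?_, subset_rfl⟩ |>.antisymm subset_union_right
  rintro x ⟨hxM, hx⟩
  exact ⟨x, hxM, foldReflection_of_inner_eq c (le_antisymm hx (h x hxM))⟩

theorem hausdorffMeasure_frontier_foldReflection_image [MeasurableSpace E] [BorelSpace E]
    (hu : ‖u‖ = 1) (d : ℝ) (s : Set E) :
    μH[d] (frontier (foldReflection u c '' s)) = μH[d] (frontier s) := by
  rw [← coe_foldReflectionEquiv c hu, ← IsometryEquiv.coe_toHomeomorph,
    ← Homeomorph.image_frontier, IsometryEquiv.coe_toHomeomorph,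
    IsometryEquiv.hausdorffMeasure_image]

theorem Orientation.two_mul_ofReal_le_hausdorffMeasure_frontier_fold_inter
    [Fact (finrank ℝ E = 2)] (o : Orientation ℝ E (Fin 2)) [MeasurableSpace E] [BorelSpace E]
    (hMc : IsCompact M) (hMconv : Convex ℝ M) (hu : ‖u‖ = 1) {p q : E} (hp : p ∈ M) (hq : q ∈ M)
    (hpc : c < ⟪u, p⟫) (hqc : ⟪u, q⟫ < c) {α β : ℝ}
    (hS : M ∩ {x | ⟪u, x⟫ = c} = o.lineParam u c '' Icc α β) :
    2 * ENNReal.ofReal (β - α) ≤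
      μH[1] (frontier ((M ∩ {x | ⟪u, x⟫ ≤ c}) ∩ foldReflection u c '' (M ∩ {x | c ≤ ⟪u, x⟫}))) := by
  have hA : IsCompact (M ∩ {x | ⟪u, x⟫ ≤ c}) :=
    hMc.inter_right (isClosed_le (by fun_prop) continuous_const)
  have hB : IsCompact (foldReflection u c '' (M ∩ {x | c ≤ ⟪u, x⟫})) :=
    (hMc.inter_right (isClosed_le continuous_const (by fun_prop))).image
      (isometry_foldReflection c hu).continuous
  refine o.two_mul_ofReal_le_hausdorffMeasure_frontier (hA.inter hB) hu (fun x hx => hx.1.2)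
    (hS ▸ inter_setOf_inner_eq_subset_fold_inter c) fun t ht => ?_
  set x := o.lineParam u c t
  have hx : x ∈ interior M := o.lineParam_mem_interior hMconv hu hp hq hpc hqc hS ht
  obtain ⟨s, ⟨hdown, hup⟩, hs : 0 < s⟩ :=
    (((eventually_add_smul_mem_of_mem_interior hx (-u)).and
      (eventually_add_smul_mem_of_mem_interior hx u)).filter_mono nhdsWithin_le_nhds |>.and
        (self_mem_nhdsWithin (s := Ioi 0))).exists
  have hinner : ⟪u, x + s • -u⟫ = c - s := by
    rw [inner_add_right, o.inner_lineParam hu, inner_smul_right, inner_neg_right,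
      real_inner_self_eq_norm_sq, hu]
    ring
  have hσ : foldReflection u c (x + s • -u) = x + s • u := by
    rw [foldReflection, hinner]; module
  refine ⟨x + s • -u, mem_fold_inter c hu hdown (hσ ▸ hup) (by linarith), ?_, by linarith⟩
  rw [inner_add_right, o.inner_rightAngleRotation_lineParam hu, inner_smul_right,
    inner_neg_right, o.inner_rightAngleRotation_self]
  ring

theorem hausdorffMeasure_frontier_fold_le_of_crossing [Fact (finrank ℝ E = 2)] [MeasurableSpace E]
    [BorelSpace E] (hMc : IsCompact M) (hMconv : Convex ℝ M) (hu : ‖u‖ = 1) {p q : E}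
    (hp : p ∈ M) (hq : q ∈ M) (hpc : c < ⟪u, p⟫) (hqc : ⟪u, q⟫ < c) :
    μH[1] (frontier ((M ∩ {x | ⟪u, x⟫ ≤ c}) ∪ foldReflection u c '' (M ∩ {x | c ≤ ⟪u, x⟫}))) ≤
      μH[1] (frontier M) := by
  set A := M ∩ {x | ⟪u, x⟫ ≤ c}
  set B := foldReflection u c '' (M ∩ {x | c ≤ ⟪u, x⟫})
  have := FiniteDimensional.of_fact_finrank_eq_two (K := ℝ) (V := E)
  let o : Orientation ℝ E (Fin 2) := (finBasisOfFinrankEq ℝ E Fact.out).orientation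
  obtain ⟨α, β, hS⟩ := o.exists_inter_eq_lineParam_image_Icc hMc hMconv hu c
  set L := ENNReal.ofReal (β - α)
  have hf : Continuous fun x : E => ⟪u, x⟫ := by fun_prop
  have hSL : μH[1] (M ∩ {x | ⟪u, x⟫ = c}) = L :=
    hS ▸ o.hausdorffMeasure_lineParam_image_Icc hu c α β
  have hA : μH[1] (frontier A) ≤ μH[1] (frontier M ∩ {x | ⟪u, x⟫ < c}) + L :=
    hSL ▸ measure_frontier_inter_setOf_le_le _ hMc.isClosed hf continuous_const
  have hB : μH[1] (frontier B) ≤ μH[1] (frontier M ∩ {x | c < ⟪u, x⟫}) + L := by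
    simp only [B, hausdorffMeasure_frontier_foldReflection_image c hu, ← hSL, eq_comm (b := c)]
    exact measure_frontier_inter_setOf_le_le _ hMc.isClosed continuous_const hf
  have hAB : 2 * L ≤ μH[1] (frontier (A ∩ B)) :=
    o.two_mul_ofReal_le_hausdorffMeasure_frontier_fold_inter c hMc hMconv hu hp hq hpc hqc hS
  have hM := measure_inter_setOf_lt_add_measure_inter_setOf_gt_le μH[1] (frontier M)
    hf.measurable c
  refine (ENNReal.add_le_add_iff_right (by finiteness : 2 * L ≠ ⊤)).mp ?_
  calc μH[1] (frontier (A ∪ B)) + 2 * L ≤ μH[1] (frontier (A ∪ B)) + μH[1] (frontier (A ∩ B)) := by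
        gcongr
    _ ≤ μH[1] (frontier A) + μH[1] (frontier B) :=
        measure_frontier_union_add_measure_frontier_inter_le _ _ _
    _ ≤ μH[1] (frontier M ∩ {x | ⟪u, x⟫ < c}) + L + (μH[1] (frontier M ∩ {x | c < ⟪u, x⟫}) + L) :=
        add_le_add hA hB
    _ = μH[1] (frontier M ∩ {x | ⟪u, x⟫ < c}) + μH[1] (frontier M ∩ {x | c < ⟪u, x⟫}) + 2 * L := by
        ring
    _ ≤ μH[1] (frontier M) + 2 * L := by gcongr

end Fold

/-- Folding a compact convex set `M` in the plane across the line `{x | ⟪u,x⟫ = c}`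
(where `‖u‖ = 1`) does not increase the perimeter: the resulting set
`(M ∩ H⁺) ∪ σ (M ∩ H⁻)`, with `σ` the reflection across the line, has perimeter
at most that of `M`. -/
theorem fold_perimeter_le
    (M : Set (EuclideanSpace ℝ (Fin 2)))
    (hMc : IsCompact M) (hMconv : Convex ℝ M)
    (u : EuclideanSpace ℝ (Fin 2)) (hu : ‖u‖ = 1) (c : ℝ) :
    μH[1] (frontier
      ((M ∩ {x | (inner ℝ u x : ℝ) ≤ c}) ∪
        (fun x => x - (2 * ((inner ℝ u x : ℝ) - c)) • u) ''
          (M ∩ {x | c ≤ (inner ℝ u x : ℝ)}))) ≤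
      μH[1] (frontier M) := by
  change μH[1] (frontier (_ ∪ foldReflection u c '' _)) ≤ _
  by_cases h₁ : ∀ x ∈ M, ⟪u, x⟫ ≤ c
  · rw [fold_eq_self_of_forall_inner_le c h₁]
  by_cases h₂ : ∀ x ∈ M, c ≤ ⟪u, x⟫
  · rw [fold_eq_image_of_forall_le_inner c h₂, hausdorffMeasure_frontier_foldReflection_image c hu]
  push Not at h₁ h₂
  obtain ⟨p, hp, hpc⟩ := h₁
  obtain ⟨q, hq, hqc⟩ := h₂
  have : Fact (finrank ℝ (EuclideanSpace ℝ (Fin 2)) = 2) := ⟨finrank_euclideanSpace_fin⟩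
  exact hausdorffMeasure_frontier_fold_le_of_crossing c hMc hMconv hu hp hq hpc hqc
end

section
/- Folding a disk across a line yields a set coverable by the disk: if D is a closed disk of radius r and f is a line-folding map (identity on one closed half-plane, reflection on the other), then f(D) is contained in a translate of D. -/
/-! The fold is 1-Lipschitz: written as `x ↦ x - (2 * max (⟪u, x⟫ - c) 0) • u` with `‖u‖ = 1`, it
shrinks the squared distance between two points by `4 m (a - b) - 4 m ^ 2`, where `a`, `b` are their
signed distances to the line and `m = max a 0 - max b 0`; this is nonnegative because `max · 0` is
monotone and 1-Lipschitz. Hence the disk `closedBall z r` lands in `closedBall (f z) r`, its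
translate by `f z - z`. -/

open Metric Set

open scoped RealInnerProductSpace

section

variable {E : Type*} [NormedAddCommGroup E] [InnerProductSpace ℝ E]

noncomputable def hyperplaneFold (u : E) (c : ℝ) (x : E) : E :=
  if ⟪u, x⟫ ≤ c then x else x - (2 * (⟪u, x⟫ - c)) • u

lemma hyperplaneFold_eq_sub_smul (u : E) (c : ℝ) (x : E) :
    hyperplaneFold u c x = x - (2 * max (⟪u, x⟫ - c) 0) • u := by
  unfold hyperplaneFold
  split_ifs with h
  · simp [max_eq_right (sub_nonpos.mpr h)]
  · rw [max_eq_left (sub_nonneg.mpr (not_le.mp h).le)]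

lemma sq_max_zero_sub_max_zero_le (a b : ℝ) :
    (max a 0 - max b 0) ^ 2 ≤ (max a 0 - max b 0) * (a - b) := by
  rcases le_total a 0 with ha | ha <;> rcases le_total b 0 with hb | hb <;>
    simp only [max_eq_left, max_eq_right, ha, hb] <;> nlinarith

lemma norm_sub_smul_unit_sq {u : E} (hu : ‖u‖ = 1) (w : E) (t : ℝ) :
    ‖w - t • u‖ ^ 2 = ‖w‖ ^ 2 - 2 * t * ⟪u, w⟫ + t ^ 2 := by
  rw [norm_sub_sq_real, real_inner_smul_right, real_inner_comm, norm_smul, hu,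
    Real.norm_eq_abs, mul_one, sq_abs]
  ring

theorem lipschitzWith_hyperplaneFold {u : E} (hu : ‖u‖ = 1) (c : ℝ) :
    LipschitzWith 1 (hyperplaneFold u c) := by
  refine LipschitzWith.of_dist_le_mul fun x y => ?_
  set m := max (⟪u, x⟫ - c) 0 - max (⟪u, y⟫ - c) 0
  have hdiff : hyperplaneFold u c x - hyperplaneFold u c y = (x - y) - (2 * m) • u := by
    simp only [hyperplaneFold_eq_sub_smul, m]
    module
  have hm := sq_max_zero_sub_max_zero_le (⟪u, x⟫ - c) (⟪u, y⟫ - c)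
  have hsq : dist (hyperplaneFold u c x) (hyperplaneFold u c y) ^ 2 ≤ dist x y ^ 2 := by
    rw [dist_eq_norm, dist_eq_norm, hdiff, norm_sub_smul_unit_sq hu, inner_sub_right]
    nlinarith
  rw [NNReal.coe_one, one_mul]
  exact le_of_sq_le_sq hsq dist_nonneg

end

theorem fold_disk_subset_translate_general
    (r : ℝ) (z : EuclideanSpace ℝ (Fin 2))
    (u : EuclideanSpace ℝ (Fin 2)) (hu : ‖u‖ = 1) (c : ℝ) :
    ∃ v : EuclideanSpace ℝ (Fin 2),
      (fun x : EuclideanSpace ℝ (Fin 2) =>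
          if (inner ℝ u x : ℝ) ≤ c then x else x - (2 * ((inner ℝ u x : ℝ) - c)) • u) ''
        closedBall z r ⊆ (fun p => v + p) '' closedBall z r := by
  refine ⟨hyperplaneFold u c z - z, ?_⟩
  have hmaps := (lipschitzWith_hyperplaneFold hu c).mapsTo_closedBall z r
  rw [NNReal.coe_one, one_mul] at hmaps
  rw [image_add_left, preimage_add_left_closedBall, neg_neg, sub_add_cancel]
  exact hmaps.image_subset

/-- Folding a closed disk of radius `r` across a line yields a set contained in a
translate of the disk. -/
theorem fold_disk_subset_translate
    (r : ℝ) (hr : 0 ≤ r) (z : EuclideanSpace ℝ (Fin 2))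
    (u : EuclideanSpace ℝ (Fin 2)) (hu : ‖u‖ = 1) (c : ℝ) :
    ∃ v : EuclideanSpace ℝ (Fin 2),
      (fun x : EuclideanSpace ℝ (Fin 2) =>
          if (inner ℝ u x : ℝ) ≤ c then x else x - (2 * ((inner ℝ u x : ℝ) - c)) • u) ''
        closedBall z r ⊆ (fun p => v + p) '' closedBall z r :=
  fold_disk_subset_translate_general r z u hu c
end

section
/- Kawasaki's theorem (necessity): at any interior vertex of a flat-folding crease pattern, the alternating sum of the consecutive angles between creases is zero; equivalently, the angles of the 'black' faces around the vertex sum to π. -/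
/-!
Let `L i` be the linear part of the folding on the `i`-th sector. Two consecutive maps agree on
their common crease, so each crease has a well-defined image `w j`. Since `L i` maps creases `i`
and `i + 1` to `w i` and `w (i + 1)`, the oriented angle from `w i` to `w (i + 1)` is
`± (φ (i + 1) - φ i)`, the sign being the orientation of `L i`. These angles telescope around the
folded image to the angle from `w 0` to itself, so the alternating sum is a multiple of `2π`. It
is the difference of the even and the odd sector sums, two positive numbers adding up to `2π`,
so it vanishes.
-/

open Finset

/-- The unit vector in the plane at angle `θ`. -/
noncomputable def dirAngle (θ : ℝ) : EuclideanSpace ℝ (Fin 2) :=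
  (EuclideanSpace.equiv (Fin 2) ℝ).symm ![Real.cos θ, Real.sin θ]

attribute [local instance] FiniteDimensional.of_fact_finrank_eq_two
  Complex.finrank_real_complex_fact

theorem Finset.sum_range_two_mul {M : Type*} [AddCommMonoid M] (f : ℕ → M) (n : ℕ) :
    ∑ i ∈ range (2 * n), f i = ∑ i ∈ range n, (f (2 * i) + f (2 * i + 1)) := by
  induction n with
  | zero => simp
  | succ n ih => rw [Nat.mul_succ, sum_range_succ, sum_range_succ, sum_range_succ, ih, add_assoc]

theorem Finset.sum_range_two_mul_neg_one_pow_mul {R : Type*} [CommRing R] (f : ℕ → R) (n : ℕ) :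
    ∑ i ∈ range (2 * n), (-1) ^ i * f i =
      ∑ i ∈ range n, f (2 * i) - ∑ i ∈ range n, f (2 * i + 1) := by
  rw [sum_range_two_mul, ← sum_sub_distrib]
  simp [pow_succ, pow_mul, sub_eq_add_neg]

theorem Real.Angle.eq_zero_of_coe_eq_zero_of_abs_lt {x : ℝ} (hx : (x : Real.Angle) = 0)
    (hlt : |x| < 2 * Real.pi) : x = 0 := by
  obtain ⟨n, rfl⟩ := Real.Angle.coe_eq_zero_iff.1 hx
  rw [zsmul_eq_mul, abs_mul, abs_of_pos Real.two_pi_pos, mul_lt_iff_lt_one_left Real.two_pi_pos,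
    ← Int.cast_abs, ← Int.cast_one, Int.cast_lt, Int.abs_lt_one_iff] at hlt
  simp [hlt]

theorem AffineIsometryEquiv.linearIsometryEquiv_apply_eq_of_apply_vadd_eq
    {𝕜 V P V₂ P₂ : Type*} [NormedField 𝕜] [SeminormedAddCommGroup V] [NormedSpace 𝕜 V]
    [PseudoMetricSpace P] [NormedAddTorsor V P] [SeminormedAddCommGroup V₂] [NormedSpace 𝕜 V₂]
    [PseudoMetricSpace P₂] [NormedAddTorsor V₂ P₂] {f g : P ≃ᵃⁱ[𝕜] P₂} {p : P} {x y : V}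
    (h₀ : f p = g p) (h : f (x +ᵥ p) = g (y +ᵥ p)) :
    f.linearIsometryEquiv x = g.linearIsometryEquiv y := by
  rwa [map_vadd, map_vadd, h₀, vadd_right_cancel_iff] at h

namespace Orientation

variable {V : Type*} [NormedAddCommGroup V] [InnerProductSpace ℝ V]
  [Fact (Module.finrank ℝ V = 2)] (o : Orientation ℝ V (Fin 2))

theorem oangle_map_of_det_pos {f : V ≃ₗᵢ[ℝ] V}
    (hf : 0 < LinearMap.det (f.toLinearEquiv : V →ₗ[ℝ] V)) (x y : V) :
    o.oangle (f x) (f y) = o.oangle x y := by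
  have hmap := (o.map_eq_iff_det_pos f.toLinearEquiv
    (by rw [Fintype.card_fin, Fact.out (p := Module.finrank ℝ V = 2)])).2 hf
  conv_lhs => rw [← hmap]
  simp

theorem oangle_map_of_det_neg {f : V ≃ₗᵢ[ℝ] V}
    (hf : LinearMap.det (f.toLinearEquiv : V →ₗ[ℝ] V) < 0) (x y : V) :
    o.oangle (f x) (f y) = -o.oangle x y := by
  have hmap := (o.map_eq_neg_iff_det_neg f.toLinearEquiv
    (by rw [Fintype.card_fin, Fact.out (p := Module.finrank ℝ V = 2)])).2 hf
  rw [← neg_neg (o.oangle (f x) (f y)), ← oangle_neg_orientation_eq_neg, ← hmap]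
  simp

theorem oangle_map_eq_neg_one_pow_zsmul {f : V ≃ₗᵢ[ℝ] V} {n : ℕ}
    (hf : 0 < LinearMap.det (f.toLinearEquiv : V →ₗ[ℝ] V) ↔ Even n) (x y : V) :
    o.oangle (f x) (f y) = (-1 : ℤ) ^ n • o.oangle x y := by
  rcases n.even_or_odd with hn | hn
  · rw [o.oangle_map_of_det_pos (hf.2 hn), hn.neg_one_pow, one_zsmul]
  · have hdet : LinearMap.det (f.toLinearEquiv : V →ₗ[ℝ] V) ≠ 0 := by
      rw [← LinearEquiv.coe_det]
      exact Units.ne_zero _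
    have hneg : LinearMap.det (f.toLinearEquiv : V →ₗ[ℝ] V) < 0 :=
      lt_of_le_of_ne (not_lt.1 fun h => Nat.not_even_iff_odd.2 hn (hf.1 h)) hdet
    rw [o.oangle_map_of_det_neg hneg, hn.neg_one_pow, neg_one_zsmul]

theorem sum_range_oangle {w : ℕ → V} {n : ℕ} (hw : ∀ i ≤ n, w i ≠ 0) :
    ∑ i ∈ range n, o.oangle (w i) (w (i + 1)) = o.oangle (w 0) (w n) := by
  induction n with
  | zero => simp
  | succ n ih =>
    rw [sum_range_succ, ih fun i hi => hw i (by omega),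
      o.oangle_add (hw 0 (by omega)) (hw n (by omega)) (hw (n + 1) le_rfl)]

theorem sum_neg_one_pow_zsmul_oangle_eq_zero {u : ℕ → V} {L : ℕ → V ≃ₗᵢ[ℝ] V} {n : ℕ}
    (hu : ∀ i ≤ n, u i ≠ 0)
    (horient : ∀ i < n, (0 < LinearMap.det ((L i).toLinearEquiv : V →ₗ[ℝ] V) ↔ Even i))
    (hagree : ∀ i, i + 1 < n → L i (u (i + 1)) = L (i + 1) (u (i + 1)))
    (hwrap : L (n - 1) (u n) = L 0 (u 0)) :
    ∑ i ∈ range n, (-1 : ℤ) ^ i • o.oangle (u i) (u (i + 1)) = 0 := by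
  -- `w j` is the image of the `j`-th crease; the last crease is the first one again
  set w : ℕ → V := fun j => if j = n then L 0 (u 0) else L j (u j) with hw_def
  have hLw : ∀ i < n, L i (u (i + 1)) = w (i + 1) := by
    intro i hi
    rcases eq_or_lt_of_le (Nat.succ_le_of_lt hi) with h | h
    · subst h
      simpa [hw_def] using hwrap
    · simpa [hw_def, h.ne] using hagree i h
  have hw_ne : ∀ j ≤ n, w j ≠ 0 := by
    intro j hj
    by_cases h : j = n <;> simp [hw_def, h, hu, hj]
  calc ∑ i ∈ range n, (-1 : ℤ) ^ i • o.oangle (u i) (u (i + 1))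
      = ∑ i ∈ range n, o.oangle (w i) (w (i + 1)) := by
        refine sum_congr rfl fun i hi => ?_
        have hi := mem_range.1 hi
        rw [← o.oangle_map_eq_neg_one_pow_zsmul (horient i hi), hLw i hi]
        simp [hw_def, hi.ne]
    _ = o.oangle (w 0) (w n) := o.sum_range_oangle hw_ne
    _ = 0 := by simp [hw_def]

end Orientation

instance : Fact (Module.finrank ℝ (EuclideanSpace ℝ (Fin 2)) = 2) := ⟨finrank_euclideanSpace_fin⟩

noncomputable def planeOrientation : Orientation ℝ (EuclideanSpace ℝ (Fin 2)) (Fin 2) :=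
  Complex.orientation.map (Fin 2) Complex.orthonormalBasisOneI.repr.toLinearEquiv

theorem orthonormalBasisOneI_repr_symm_dirAngle (θ : ℝ) :
    Complex.orthonormalBasisOneI.repr.symm (dirAngle θ) = (θ : Real.Angle).toCircle := by
  rw [Complex.orthonormalBasisOneI_repr_symm_apply, Real.Angle.coe_toCircle]
  simp [dirAngle]

theorem dirAngle_ne_zero (θ : ℝ) : dirAngle θ ≠ 0 := by
  rw [← map_ne_zero_iff _ Complex.orthonormalBasisOneI.repr.symm.injective,
    orthonormalBasisOneI_repr_symm_dirAngle]
  exact Circle.coe_ne_zero _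

theorem oangle_dirAngle (a b : ℝ) :
    planeOrientation.oangle (dirAngle a) (dirAngle b) = (b - a : ℝ) := by
  rw [planeOrientation, Orientation.oangle_map, Complex.oangle,
    orthonormalBasisOneI_repr_symm_dirAngle, orthonormalBasisOneI_repr_symm_dirAngle,
    ← Circle.coe_inv_eq_conj, ← Circle.coe_mul, ← Real.Angle.toCircle_neg,
    ← Real.Angle.toCircle_add, Real.Angle.arg_toCircle, neg_add_eq_sub,
    Real.Angle.coe_sub]

theorem coe_sum_neg_one_pow_mul_sub_eq_zero {φ : ℕ → ℝ}
    {L : ℕ → EuclideanSpace ℝ (Fin 2) ≃ₗᵢ[ℝ] EuclideanSpace ℝ (Fin 2)} {n : ℕ}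
    (horient : ∀ i < n, (0 < LinearMap.det ((L i).toLinearEquiv :
      EuclideanSpace ℝ (Fin 2) →ₗ[ℝ] EuclideanSpace ℝ (Fin 2)) ↔ Even i))
    (hagree : ∀ i, i + 1 < n → L i (dirAngle (φ (i + 1))) = L (i + 1) (dirAngle (φ (i + 1))))
    (hwrap : L (n - 1) (dirAngle (φ n)) = L 0 (dirAngle (φ 0))) :
    ((∑ i ∈ range n, (-1 : ℝ) ^ i * (φ (i + 1) - φ i) : ℝ) : Real.Angle) = 0 := by
  rw [← planeOrientation.sum_neg_one_pow_zsmul_oangle_eq_zero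
    (fun i _ => dirAngle_ne_zero (φ i)) horient hagree hwrap, ← Real.Angle.coe_coeHom, map_sum]
  refine sum_congr rfl fun i _ => ?_
  rw [oangle_dirAngle, Real.Angle.coe_coeHom, ← Real.Angle.coe_zsmul, zsmul_eq_mul,
    Int.cast_pow, Int.cast_neg, Int.cast_one]

/-- Kawasaki's theorem (necessity): at an interior vertex `v` of a flat-folding crease
pattern, with `2k` creases at angles `φ 0 < φ 1 < ⋯ < φ (2k) = φ 0 + 2π`, if the
folding acts on the `i`-th angular sector as an affine isometry `g i` which is
orientation-preserving exactly for even `i`, and consecutive isometries agree on the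
common crease ray (including the wrap-around ray), then the alternating sum of the
sector angles vanishes; equivalently the odd-indexed sector angles sum to `π`. -/
theorem kawasaki_necessity
    (k : ℕ) (hk : 1 ≤ k) (v : EuclideanSpace ℝ (Fin 2)) (φ : ℕ → ℝ)
    (g : ℕ → (EuclideanSpace ℝ (Fin 2) ≃ᵃⁱ[ℝ] EuclideanSpace ℝ (Fin 2)))
    (hmono : ∀ i < 2 * k, φ i < φ (i + 1))
    (htot : φ (2 * k) = φ 0 + 2 * Real.pi)
    (horient : ∀ i < 2 * k,
      (0 < LinearMap.det
        ((g i).linearIsometryEquiv.toLinearEquiv :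
          EuclideanSpace ℝ (Fin 2) →ₗ[ℝ] EuclideanSpace ℝ (Fin 2)) ↔ Even i))
    (hagree : ∀ i, i + 1 < 2 * k → ∀ t : ℝ, 0 ≤ t →
      g i (v + t • dirAngle (φ (i + 1))) = g (i + 1) (v + t • dirAngle (φ (i + 1))))
    (hwrap : ∀ t : ℝ, 0 ≤ t →
      g (2 * k - 1) (v + t • dirAngle (φ (2 * k))) = g 0 (v + t • dirAngle (φ 0))) :
    (∑ i ∈ Finset.range (2 * k), (-1 : ℝ) ^ i * (φ (i + 1) - φ i)) = 0 ∧
    (∑ i ∈ Finset.range k, (φ (2 * i + 1) - φ (2 * i))) = Real.pi := by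
  have hlin : ∀ i, i + 1 < 2 * k → (g i).linearIsometryEquiv (dirAngle (φ (i + 1))) =
      (g (i + 1)).linearIsometryEquiv (dirAngle (φ (i + 1))) := fun i hi =>
    AffineIsometryEquiv.linearIsometryEquiv_apply_eq_of_apply_vadd_eq (p := v)
      (by simpa using hagree i hi 0 le_rfl)
      (by simpa [vadd_eq_add, add_comm] using hagree i hi 1 zero_le_one)
  have hlin_wrap : (g (2 * k - 1)).linearIsometryEquiv (dirAngle (φ (2 * k))) =
      (g 0).linearIsometryEquiv (dirAngle (φ 0)) :=
    AffineIsometryEquiv.linearIsometryEquiv_apply_eq_of_apply_vadd_eq (p := v)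
      (by simpa using hwrap 0 le_rfl) (by simpa [vadd_eq_add, add_comm] using hwrap 1 zero_le_one)
  have hcoe := coe_sum_neg_one_pow_mul_sub_eq_zero horient hlin hlin_wrap
  have hsector : ∀ i < 2 * k, 0 < φ (i + 1) - φ i := fun i hi => sub_pos.2 (hmono i hi)
  have heven : 0 < ∑ i ∈ range k, (φ (2 * i + 1) - φ (2 * i)) :=
    sum_pos (fun i hi => hsector _ (by simp at hi; omega)) (nonempty_range_iff.2 (by omega))
  have hodd : 0 < ∑ i ∈ range k, (φ (2 * i + 1 + 1) - φ (2 * i + 1)) :=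
    sum_pos (fun i hi => hsector _ (by simp at hi; omega)) (nonempty_range_iff.2 (by omega))
  have htotal : ∑ i ∈ range k, (φ (2 * i + 1) - φ (2 * i)) +
      ∑ i ∈ range k, (φ (2 * i + 1 + 1) - φ (2 * i + 1)) = 2 * Real.pi := by
    rw [← sum_add_distrib, ← sum_range_two_mul (fun i => φ (i + 1) - φ i), sum_range_sub, htot]
    ring
  have halt := sum_range_two_mul_neg_one_pow_mul (fun i => φ (i + 1) - φ i) k
  have hzero := Real.Angle.eq_zero_of_coe_eq_zero_of_abs_lt hcoe
    (by rw [halt, abs_sub_lt_iff]; constructor <;> linarith)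
  exact ⟨hzero, by linarith⟩
end
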